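/- There exists a connected uniform graph Γ that is not Gromov hyperbolic (its hyperbolicity constant δ(Γ) is infinite) and satisfies h(Γ) > 0. -/

import Mathlib

/-!
Take `Γ = T □ ℤ`, the box product of the rooted binary tree with the line. Its metric is the
`ℓ¹`-sum of the factor metrics, so Gromov products add up over the factors, and flat squares
with arbitrarily long sides have arbitrarily large four-point defect: `Γ` is not hyperbolic.
Every vertex `(a, m)` has the two children `(false :: a, m)` and `(true :: a, m)`, distinct for
distinct `(a, m)`, so a finite set `A` has `2 |A|` children, at least `|A|` of them in `∂A`:
hence `h(Γ) ≥ 1`.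
-/

open scoped ENNReal

namespace TreePaper

variable {V : Type*}

/-- The (outer) vertex boundary `∂A = {w : d(w,A) = 1}` of a set of vertices. -/
def vboundary (G : SimpleGraph V) (A : Set V) : Set V :=
  {w | w ∉ A ∧ ∃ a ∈ A, G.Adj w a}

/-- The ratio `|∂A| / |A|`, valued in `ℝ≥0∞`. -/
noncomputable def eratio (G : SimpleGraph V) (A : Finset V) : ℝ≥0∞ :=
  ((vboundary G (A : Set V)).encard : ℝ≥0∞) / (A.card : ℝ≥0∞)

/-- The Cheeger isoperimetric constant `h(Γ) = inf_A |∂A|/|A|`. -/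
noncomputable def cheeger (G : SimpleGraph V) : ℝ≥0∞ :=
  ⨅ (A : Finset V) (_ : A.Nonempty), eratio G A

/-- The Gromov product `(x|y)_o` with respect to the graph metric. -/
noncomputable def gp (G : SimpleGraph V) (o x y : V) : ℝ :=
  ((G.dist x o : ℝ) + (G.dist y o : ℝ) - (G.dist x y : ℝ)) / 2

open SimpleGraph Function

section Hyperbolicity

variable {α β : Type*}

lemma gp_self_right (G : SimpleGraph α) (o x : α) : gp G o x x = G.dist x o := by
  simp [gp]

lemma gp_base_left (G : SimpleGraph α) (o y : α) : gp G o o y = 0 := by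
  simp [gp, dist_comm]

lemma gp_base_right (G : SimpleGraph α) (o x : α) : gp G o x o = 0 := by
  simp [gp]

lemma _root_.SimpleGraph.Connected.dist_boxProd {G : SimpleGraph α} {H : SimpleGraph β}
    (hG : G.Connected) (hH : H.Connected) (x y : α × β) :
    (G □ H).dist x y = G.dist x.1 y.1 + H.dist x.2 y.2 := by
  have h := edist_boxProd (G := G) (H := H) x y
  rw [← ((hG.boxProd hH).preconnected x y).coe_dist_eq_edist,
    ← (hG.preconnected x.1 y.1).coe_dist_eq_edist,
    ← (hH.preconnected x.2 y.2).coe_dist_eq_edist] at h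
  exact_mod_cast h

lemma gp_boxProd {G : SimpleGraph α} {H : SimpleGraph β} (hG : G.Connected) (hH : H.Connected)
    (o x y : α × β) : gp (G □ H) o x y = gp G o.1 x.1 y.1 + gp H o.2 x.2 y.2 := by
  simp only [gp, hG.dist_boxProd hH]
  push_cast
  ring

/-- In the flat square `o = (a, b)`, `x = (a', b)`, `y = (a, b')`, `z = (a', b')` the defect
`min ((x|z)_o, (z|y)_o) - (x|y)_o` equals `min (d(a, a'), d(b, b'))`. -/
theorem exists_gp_defect_gt_of_boxProd {G : SimpleGraph α} {H : SimpleGraph β}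
    (hG : G.Connected) (hH : H.Connected) (hGu : ∀ n : ℕ, ∃ a a', n ≤ G.dist a a')
    (hHu : ∀ n : ℕ, ∃ b b', n ≤ H.dist b b') (δ : ℝ) :
    ∃ o x y z : α × β,
      δ < min (gp (G □ H) o x z) (gp (G □ H) o z y) - gp (G □ H) o x y := by
  obtain ⟨n, hn⟩ := exists_nat_gt δ
  obtain ⟨a, a', ha⟩ := hGu n
  obtain ⟨b, b', hb⟩ := hHu n
  refine ⟨(a, b), (a', b), (a, b'), (a', b'), ?_⟩
  simp only [gp_boxProd hG hH, gp_self_right, gp_base_left, gp_base_right, add_zero, zero_add,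
    sub_zero, dist_comm (u := a'), dist_comm (u := b')]
  exact hn.trans_le (le_min (by exact_mod_cast ha) (by exact_mod_cast hb))

end Hyperbolicity

section Lipschitz

variable {α : Type*} {G : SimpleGraph α} {f : α → ℤ}

lemma _root_.SimpleGraph.Walk.le_add_length (hf : ∀ u v, G.Adj u v → f u ≤ f v + 1)
    {u v : α} (w : G.Walk u v) : f u ≤ f v + w.length := by
  induction w with
  | nil => simp
  | cons h _ ih =>
    rw [Walk.length_cons]
    push_cast
    linarith [hf _ _ h]

lemma _root_.SimpleGraph.Reachable.le_add_dist (hf : ∀ u v, G.Adj u v → f u ≤ f v + 1)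
    {u v : α} (h : G.Reachable u v) : f u ≤ f v + G.dist u v := by
  obtain ⟨w, hw⟩ := h.exists_walk_length_eq_dist
  exact hw ▸ w.le_add_length hf

end Lipschitz

section Cheeger

variable {α : Type*} {G : SimpleGraph α}

lemma card_le_encard_vboundary_of_injective (φ : α × Bool → α) (hφ : Injective φ)
    (hadj : ∀ p, G.Adj (φ p) p.1) (A : Finset α) :
    (A.card : ℕ∞) ≤ (vboundary G A).encard := by
  classical
  set C := (A ×ˢ Finset.univ).image φ
  have hC : C.card = 2 * A.card := by
    rw [Finset.card_image_of_injective _ hφ, Finset.card_product, Finset.card_univ,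
      Fintype.card_bool, mul_comm]
  have hsub : ((C \ A : Finset α) : Set α) ⊆ vboundary G A := by
    intro q hq
    simp only [Finset.coe_sdiff, Set.mem_sdiff, Finset.mem_coe, C, Finset.mem_image,
      Finset.mem_product] at hq
    obtain ⟨⟨p, hp, rfl⟩, hqA⟩ := hq
    exact ⟨hqA, p.1, hp.1, hadj p⟩
  have hcard : A.card ≤ (C \ A).card := by
    have := Finset.le_card_sdiff A C
    omega
  calc (A.card : ℕ∞) ≤ (C \ A).card := by exact_mod_cast hcard
    _ = ((C \ A : Finset α) : Set α).encard := (Set.encard_coe_eq_coe_finsetCard _).symm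
    _ ≤ _ := Set.encard_le_encard hsub

lemma one_le_cheeger_of_card_le_encard_vboundary
    (h : ∀ A : Finset α, (A.card : ℕ∞) ≤ (vboundary G A).encard) : 1 ≤ cheeger G := by
  refine le_iInf fun A => le_iInf fun hA => ?_
  rw [eratio, ENNReal.le_div_iff_mul_le (Or.inl (by exact_mod_cast hA.card_pos.ne'))
    (Or.inl (ENNReal.natCast_ne_top _)), one_mul]
  exact_mod_cast h A

end Cheeger

lemma encard_neighborSet_boxProd_le {α β : Type*} (G : SimpleGraph α) (H : SimpleGraph β)
    (x : α × β) :
    ((G □ H).neighborSet x).encard ≤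
      (G.neighborSet x.1).encard + (H.neighborSet x.2).encard := by
  rw [neighborSet_boxProd]
  refine (Set.encard_union_le _ _).trans ?_
  simp [Set.encard_prod]

/-- The rooted binary tree: the children of a word `a` are `false :: a` and `true :: a`. -/
def binaryTree : SimpleGraph (List Bool) := fromRel fun a b => ∃ x, a = x :: b

lemma binaryTree_adj_cons (x : Bool) (a : List Bool) : binaryTree.Adj (x :: a) a :=
  (fromRel_adj _ _ _).2 ⟨List.cons_ne_self x a, Or.inl ⟨x, rfl⟩⟩

lemma binaryTree_connected : binaryTree.Connected := by
  have hroot : ∀ a, binaryTree.Reachable a [] := by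
    intro a
    induction a with
    | nil => rfl
    | cons x a ih => exact (binaryTree_adj_cons x a).reachable.trans ih
  exact (connected_iff_exists_forall_reachable _).2 ⟨[], fun a => (hroot a).symm⟩

lemma length_le_of_binaryTree_adj {a b : List Bool} (h : binaryTree.Adj a b) :
    (a.length : ℤ) ≤ b.length + 1 := by
  obtain ⟨-, ⟨x, rfl⟩ | ⟨x, rfl⟩⟩ := (fromRel_adj _ _ _).1 h <;>
    push_cast [List.length_cons] <;> omega

lemma encard_neighborSet_binaryTree_le (a : List Bool) :
    (binaryTree.neighborSet a).encard ≤ 3 := by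
  have hsub :
      binaryTree.neighborSet a ⊆ (({false :: a, true :: a, a.tail} : Finset _) : Set _) := by
    intro b (hb : binaryTree.Adj a b)
    obtain ⟨-, ⟨x, rfl⟩ | ⟨x, rfl⟩⟩ := (fromRel_adj _ _ _).1 hb
    · simp
    · cases x <;> simp
  refine (Set.encard_le_encard hsub).trans ?_
  rw [Set.encard_coe_eq_coe_finsetCard]
  exact_mod_cast Finset.card_le_three

lemma le_dist_binaryTree (n : ℕ) : n ≤ binaryTree.dist (List.replicate n false) [] := by
  simpa using (binaryTree_connected.preconnected (List.replicate n false) []).le_add_dist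
    (fun _ _ => length_le_of_binaryTree_adj)

lemma hasse_int_connected : (hasse ℤ).Connected :=
  ⟨hasse_preconnected_of_succ ℤ⟩

lemma hasse_int_adj {m k : ℤ} : (hasse ℤ).Adj m k ↔ k = m + 1 ∨ m = k + 1 := by
  simp only [hasse_adj, Order.covBy_iff_add_one_eq, eq_comm]

lemma encard_neighborSet_hasse_int_le (m : ℤ) : ((hasse ℤ).neighborSet m).encard ≤ 2 := by
  have hsub : (hasse ℤ).neighborSet m ⊆ (({m - 1, m + 1} : Finset ℤ) : Set ℤ) := by
    intro k (hk : (hasse ℤ).Adj m k)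
    rcases hasse_int_adj.1 hk with rfl | rfl <;> simp
  refine (Set.encard_le_encard hsub).trans ?_
  rw [Set.encard_coe_eq_coe_finsetCard]
  exact_mod_cast Finset.card_le_two

lemma le_dist_hasse_int (n : ℕ) : n ≤ (hasse ℤ).dist (n : ℤ) 0 := by
  simpa using (hasse_int_connected.preconnected (n : ℤ) 0).le_add_dist (f := id)
    (fun _ _ h => by dsimp only [id]; rcases hasse_int_adj.1 h with rfl | rfl <;> omega)

/-- There exists a connected uniform graph `Γ` that is not Gromov
hyperbolic (its hyperbolicity constant is infinite) and satisfies `h(Γ) > 0`. -/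
theorem exists_nonhyperbolic_uniform_graph_with_cheeger_pos :
    ∃ (V : Type) (G : SimpleGraph V), G.Connected ∧
      (∃ μ : ℕ, ∀ x : V, (G.neighborSet x).encard ≤ μ) ∧
      (∀ δ : ℝ, ∃ o x y z : V, δ < min (gp G o x z) (gp G o z y) - gp G o x y) ∧
      0 < cheeger G := by
  have hT := binaryTree_connected
  have hZ := hasse_int_connected
  have children_injective :
      Injective fun p : (List Bool × ℤ) × Bool => (p.2 :: p.1.1, p.1.2) := by
    rintro ⟨⟨a, m⟩, x⟩ ⟨⟨b, k⟩, y⟩ h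
    simp_all
  refine ⟨_, binaryTree □ hasse ℤ, hT.boxProd hZ, ⟨5, fun x => ?_⟩, ?_, ?_⟩
  · exact (encard_neighborSet_boxProd_le _ _ x).trans
      (add_le_add (encard_neighborSet_binaryTree_le _) (encard_neighborSet_hasse_int_le _))
  · exact exists_gp_defect_gt_of_boxProd hT hZ (fun n => ⟨_, _, le_dist_binaryTree n⟩)
      (fun n => ⟨_, _, le_dist_hasse_int n⟩)
  · exact zero_lt_one.trans_le <| one_le_cheeger_of_card_le_encard_vboundary <|
      card_le_encard_vboundary_of_injective _ children_injective
        fun p => boxProd_adj_left.2 (binaryTree_adj_cons _ _)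

end TreePaper
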